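/- Let φₙ : X → ℝ be continuous functions on a metric space X and λₙ ≥ 0 with |φₙ(x)| ≤ λₙ for all x ∈ X and Σₙ λₙ < ∞. Set K(x,y) = Σₙ φₙ(x)φₙ(y). Then for every finite signed Borel measure μ on X: ∫_X K(x,y) dμ(y) = 0 for all x ∈ X if and only if ∫_X φₙ(y) dμ(y) = 0 for all n. -/

import Mathlib

/-!
Write `cₙ = ∫ φₙ dμ`. Uniform domination by the summable `λₙ` lets one integrate `K(x, ·)` term by
term, so `∫ K(x, y) dμ(y) = Σₙ cₙ φₙ(x)`. If this vanishes for every `x`, integrating once more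
against `μ` gives `Σₙ cₙ² = 0`, hence every `cₙ = 0`; the converse is immediate.
-/

open MeasureTheory

/-- Integral of a real-valued function against a finite signed Borel measure, via the
Jordan decomposition `μ = μ⁺ - μ⁻`. -/
noncomputable def sintegral {X : Type*} [MeasurableSpace X]
    (μ : SignedMeasure X) (f : X → ℝ) : ℝ :=
  (∫ x, f x ∂μ.toJordanDecomposition.posPart) -
    (∫ x, f x ∂μ.toJordanDecomposition.negPart)

section SignedIntegral

variable {X : Type*} [MeasurableSpace X] (μ : SignedMeasure X)

theorem sintegral_const_mul (a : ℝ) (f : X → ℝ) :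
    sintegral μ (fun y => a * f y) = a * sintegral μ f := by
  simp only [sintegral, integral_const_mul, mul_sub]

theorem sintegral_zero : sintegral μ (fun _ => (0 : ℝ)) = 0 := by
  simp [sintegral]

theorem abs_sintegral_le {f : X → ℝ} {C : ℝ} (hf : ∀ x, |f x| ≤ C) :
    |sintegral μ f| ≤ C * μ.totalVariation.real Set.univ := by
  have hbound (ν : Measure X) [IsFiniteMeasure ν] : ‖∫ x, f x ∂ν‖ ≤ C * ν.real Set.univ :=
    norm_integral_le_of_norm_le_const (Filter.Eventually.of_forall hf)
  calc |sintegral μ f|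
      ≤ ‖∫ x, f x ∂μ.toJordanDecomposition.posPart‖
          + ‖∫ x, f x ∂μ.toJordanDecomposition.negPart‖ := abs_sub _ _
    _ ≤ C * μ.toJordanDecomposition.posPart.real Set.univ
          + C * μ.toJordanDecomposition.negPart.real Set.univ :=
        add_le_add (hbound _) (hbound _)
    _ = C * μ.totalVariation.real Set.univ := by
        rw [SignedMeasure.totalVariation, measureReal_add_apply, mul_add]

theorem hasSum_integral_of_summable_bound {I : Type*} [Countable I] (ν : Measure X)
    [IsFiniteMeasure ν] {f : I → X → ℝ} (hf : ∀ n, AEStronglyMeasurable (f n) ν) {b : I → ℝ}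
    (hbd : ∀ n x, |f n x| ≤ b n) (hb : Summable b) :
    HasSum (fun n => ∫ x, f n x ∂ν) (∫ x, ∑' n, f n x ∂ν) := by
  have hbd' : ∀ n, ∀ᵐ x ∂ν, ‖f n x‖ ≤ b n := fun n => Filter.Eventually.of_forall (hbd n)
  refine hasSum_integral_of_summable_integral_norm (fun n => .of_bound (hf n) (b n) (hbd' n)) ?_
  refine (hb.mul_right (ν.real Set.univ)).of_norm_bounded fun n => ?_
  exact norm_integral_le_of_norm_le_const ((hbd' n).mono fun x hx => by rwa [norm_norm])

theorem hasSum_sintegral_tsum {I : Type*} [Countable I] {f : I → X → ℝ}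
    (hf : ∀ n, StronglyMeasurable (f n)) {b : I → ℝ} (hbd : ∀ n x, |f n x| ≤ b n)
    (hb : Summable b) :
    HasSum (fun n => sintegral μ (f n)) (sintegral μ (fun y => ∑' n, f n y)) :=
  (hasSum_integral_of_summable_bound _ (fun n => (hf n).aestronglyMeasurable) hbd hb).sub
    (hasSum_integral_of_summable_bound _ (fun n => (hf n).aestronglyMeasurable) hbd hb)

theorem hasSum_mul_sintegral {I : Type*} [Countable I] {φ : I → X → ℝ} {lam : I → ℝ}
    (hφ : ∀ n, StronglyMeasurable (φ n))
    (hbd : ∀ n x, |φ n x| ≤ lam n) (hsum : Summable lam) {a : I → ℝ} {A : ℝ}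
    (ha : ∀ n, |a n| ≤ A) :
    HasSum (fun n => a n * sintegral μ (φ n)) (sintegral μ (fun y => ∑' n, a n * φ n y)) := by
  have hterm : ∀ n y, |a n * φ n y| ≤ A * lam n := fun n y => by
    rw [abs_mul]
    exact mul_le_mul (ha n) (hbd n y) (abs_nonneg _) ((abs_nonneg _).trans (ha n))
  simpa only [sintegral_const_mul] using
    hasSum_sintegral_tsum μ (fun n => (hφ n).const_mul (a n)) hterm (hsum.mul_left A)

end SignedIntegral

/-- For the kernel `K(x,y) = Σₙ φₙ(x)φₙ(y)` with `|φₙ| ≤ λₙ` and `Σ λₙ < ∞`, a finite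
signed Borel measure `μ` on `X` annihilates `K(x,·)` for all `x ∈ X` iff it annihilates
each `φₙ`. -/
theorem hilbert_schmidt_annihilation_iff_dominated
    {X : Type*} [MetricSpace X] [MeasurableSpace X] [BorelSpace X]
    {I : Type*} [Countable I]
    (φ : I → X → ℝ) (hφ : ∀ n, Continuous (φ n))
    (lam : I → ℝ) (hlam0 : ∀ n, 0 ≤ lam n)
    (hbd : ∀ (n : I) (x : X), |φ n x| ≤ lam n)
    (hsum : Summable lam)
    (K : X → X → ℝ) (hK : ∀ x y, K x y = ∑' n, φ n x * φ n y)
    (μ : SignedMeasure X) :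
    (∀ x : X, sintegral μ (fun y => K x y) = 0) ↔
      ∀ n : I, sintegral μ (fun y => φ n y) = 0 := by
  set c : I → ℝ := fun n => sintegral μ (φ n)
  have hmeas : ∀ n, StronglyMeasurable (φ n) := fun n => (hφ n).stronglyMeasurable
  have hlam_le : ∀ n, lam n ≤ ∑' m, lam m := fun n => hsum.le_tsum n fun m _ => hlam0 m
  have hKc : ∀ x, HasSum (fun n => φ n x * c n) (sintegral μ (K x)) := fun x => by
    rw [show K x = fun y => ∑' n, φ n x * φ n y from funext (hK x)]
    exact hasSum_mul_sintegral μ hmeas hbd hsum fun n => (hbd n x).trans (hlam_le n)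
  have hc_le : ∀ n, |c n| ≤ (∑' m, lam m) * μ.totalVariation.real Set.univ := fun n =>
    (abs_sintegral_le μ (hbd n)).trans
      (mul_le_mul_of_nonneg_right (hlam_le n) measureReal_nonneg)
  constructor
  · intro h
    have hcc : HasSum (fun n => c n * c n) 0 := by
      have hK0 : (fun x => ∑' n, c n * φ n x) = fun _ => 0 := funext fun x => by
        simpa only [mul_comm] using (hKc x).tsum_eq.trans (h x)
      simpa only [hK0, sintegral_zero] using hasSum_mul_sintegral μ hmeas hbd hsum hc_le
    have hcc_zero := (hasSum_zero_iff_of_nonneg fun n => mul_self_nonneg (c n)).mp hcc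
    exact fun n => mul_self_eq_zero.mp (congrFun hcc_zero n)
  · intro h x
    exact (hKc x).unique (by simp [c, h, hasSum_zero])
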